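/- For the K₁ closure with normalized flux function F(ū₁) = (2/3)ū₁² + 1/3 (the closed second moment as a function of the first normalized moment), the eigenvalues of the Jacobian of the flux (u₀, u₁) ↦ (u₁, u₀·F(u₁/u₀)) are bounded in absolute value by 1 for all realizable (u₀, u₁) with u₀ > 0 and |u₁/u₀| ≤ 1. -/

import Mathlib

/-! Three times the characteristic polynomial of the Jacobian at `λ` equals
`2 (λ - r)² + (λ² - 1)`, so any real eigenvalue satisfies `λ² ≤ 1`. -/

theorem Matrix.det_fin_two_sub_smul_one {R : Type*} [CommRing R] (A : Matrix (Fin 2) (Fin 2) R)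
    (lam : R) : (A - lam • (1 : Matrix (Fin 2) (Fin 2) R)).det =
      (A 0 0 - lam) * (A 1 1 - lam) - A 0 1 * A 1 0 := by
  simp [Matrix.det_fin_two]

/-- The Jacobian of `(u₀, u₁) ↦ (u₁, u₀ F(u₁ / u₀))` depends only on `r = u₁ / u₀`. -/
noncomputable def kershawJacobian (r : ℝ) : Matrix (Fin 2) (Fin 2) ℝ :=
  !![0, 1; 1 / 3 - (2 / 3) * r ^ 2, (4 / 3) * r]

theorem three_mul_det_kershawJacobian_sub_smul (r lam : ℝ) :
    3 * (kershawJacobian r - lam • (1 : Matrix (Fin 2) (Fin 2) ℝ)).det =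
      2 * (lam - r) ^ 2 + (lam ^ 2 - 1) := by
  rw [Matrix.det_fin_two_sub_smul_one]
  simp only [kershawJacobian, Matrix.of_apply, Matrix.cons_val', Matrix.cons_val_zero,
    Matrix.cons_val_one, Matrix.empty_val', Matrix.cons_val_fin_one]
  ring

theorem abs_le_one_of_det_kershawJacobian_sub_smul_eq_zero {r lam : ℝ}
    (h : (kershawJacobian r - lam • (1 : Matrix (Fin 2) (Fin 2) ℝ)).det = 0) : |lam| ≤ 1 := by
  have hsq : lam ^ 2 ≤ 1 := by
    have key := three_mul_det_kershawJacobian_sub_smul r lam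
    rw [h] at key
    linarith [sq_nonneg (lam - r)]
  exact sq_le_one_iff_abs_le_one lam |>.mp hsq

theorem stmt18_general (u0 u1 : ℝ) :
    let r : ℝ := u1 / u0
    let J : Matrix (Fin 2) (Fin 2) ℝ :=
      !![0, 1; 1 / 3 - (2 / 3) * r ^ 2, (4 / 3) * r]
    ∀ lam : ℝ, (J - lam • (1 : Matrix (Fin 2) (Fin 2) ℝ)).det = 0 → |lam| ≤ 1 := by
  intro r J lam hdet
  exact abs_le_one_of_det_kershawJacobian_sub_smul_eq_zero (r := r) hdet

theorem stmt18 (u0 u1 : ℝ) (h0 : 0 < u0) (h1 : |u1 / u0| ≤ 1) :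
    let r : ℝ := u1 / u0
    let J : Matrix (Fin 2) (Fin 2) ℝ :=
      !![0, 1; 1 / 3 - (2 / 3) * r ^ 2, (4 / 3) * r]
    ∀ lam : ℝ, (J - lam • (1 : Matrix (Fin 2) (Fin 2) ℝ)).det = 0 → |lam| ≤ 1 :=
  stmt18_general u0 u1
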